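/- Let C be the companion matrix of p(λ) = λ^k + c₁λ^{k-1} + ⋯ + c_k and q(t) = 1 + c₁t + ⋯ + c_kt^k. If q(t) ≠ 0, then I - tC is invertible, and the unique solution x ∈ ℝ^k of (I - tC)x = -e₂ has components x₁ = c_k t^{k-1}/q(t), x_i = (-t^{i-2} - c₁t^{i-1} - ⋯ - c_{k-i}t^{k-i})/q(t) for 2 ≤ i ≤ k-1, and x_k = -t^{k-2}/q(t). -/
import Mathlib


open Matrix Finset

/-- The companion matrix of `λ^k + c₁λ^{k-1} + ⋯ + c_k`. -/
noncomputable def companion (k : ℕ) (c : ℕ → ℝ) : Matrix (Fin k) (Fin k) ℝ :=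
  fun i j => if (j : ℕ) = k - 1 then -c (k - (i : ℕ)) else if (i : ℕ) = (j : ℕ) + 1 then 1 else 0

lemma companion_row (K : ℕ) (c : ℕ → ℝ) (t : ℝ) (y : Fin (K+2) → ℝ) (i : Fin (K+2)) :
    ((1 : Matrix (Fin (K+2)) (Fin (K+2)) ℝ) - t • companion (K+2) c).mulVec y i =
      y i + t * c (K + 2 - (i:ℕ)) * y ⟨K+1, by omega⟩ -
        (if h : 1 ≤ (i:ℕ) then t * y ⟨(i:ℕ)-1, by omega⟩ else 0) := by
  have key : ∀ j : Fin (K+2), t * companion (K+2) c i j * y j =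
      (if j = (⟨K+1, by omega⟩ : Fin (K+2)) then -(t * c (K + 2 - (i:ℕ)) * y j) else 0) +
      (if h : 1 ≤ (i:ℕ) then (if j = (⟨(i:ℕ)-1, by omega⟩ : Fin (K+2)) then t * y j else 0)
        else 0) := by
    intro j
    have hi := i.isLt
    have hj := j.isLt
    simp only [companion, Fin.ext_iff]
    by_cases h1 : (j:ℕ) = K + 2 - 1
    · have h2 : ¬ (i:ℕ) = (j:ℕ) + 1 := by omega
      by_cases h3 : 1 ≤ (i:ℕ)
      · have h4 : ¬ ((j:ℕ) = (i:ℕ) - 1) := by omega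
        simp only [h1, if_pos, h3, dif_pos]
        rw [if_pos (by omega), if_neg (by omega)]
        ring
      · simp only [h1, if_pos]
        rw [if_pos (by omega), dif_neg h3]
        ring
    · rw [if_neg h1]
      by_cases h2 : (i:ℕ) = (j:ℕ) + 1
      · have h3 : 1 ≤ (i:ℕ) := by omega
        rw [if_pos h2, if_neg (by omega), dif_pos h3, if_pos (by omega)]
        ring
      · rw [if_neg h2, if_neg (by omega)]
        by_cases h3 : 1 ≤ (i:ℕ)
        · rw [dif_pos h3, if_neg (by omega)]
          ring
        · rw [dif_neg h3]
          ring
  simp only [Matrix.mulVec, dotProduct, Matrix.sub_apply, Matrix.smul_apply,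
    Matrix.one_apply, smul_eq_mul, sub_mul, ite_mul, one_mul, zero_mul, mul_assoc]
  rw [Finset.sum_sub_distrib, Finset.sum_ite_eq]
  simp only [Finset.mem_univ, if_pos, ← mul_assoc]
  rw [Finset.sum_congr rfl (fun j _ => key j), Finset.sum_add_distrib,
    Finset.sum_ite_eq' Finset.univ (⟨K+1, by omega⟩ : Fin (K+2))]
  by_cases h : 1 ≤ (i:ℕ)
  · simp only [h, dif_pos]
    rw [Finset.sum_ite_eq' Finset.univ (⟨(i:ℕ)-1, by omega⟩ : Fin (K+2))]
    simp only [Finset.mem_univ, if_pos]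
    ring
  · simp only [h, dif_neg, not_false_iff, Finset.sum_const_zero, Finset.mem_univ, if_pos]
    ring

lemma companion_ker (K : ℕ) (c : ℕ → ℝ) (t q : ℝ)
    (hqdef : q = 1 + ∑ i ∈ range (K+2), c (i + 1) * t ^ (i + 1)) (hq : q ≠ 0)
    (z : Fin (K+2) → ℝ)
    (hz : ((1 : Matrix (Fin (K+2)) (Fin (K+2)) ℝ) - t • companion (K+2) c).mulVec z = 0) :
    z = 0 := by
  set zl := z ⟨K+1, by omega⟩ with hzl
  have row : ∀ i : Fin (K+2), z i + t * c (K+2 - (i:ℕ)) * zl -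
      (if h : 1 ≤ (i:ℕ) then t * z ⟨(i:ℕ)-1, by omega⟩ else 0) = 0 := by
    intro i
    rw [← companion_row, hz, Pi.zero_apply]
  have claim : ∀ i, ∀ h : i < K+2, z ⟨i, h⟩ =
      -(∑ j ∈ range (i+1), c (K+2-j) * t^(i+1-j)) * zl := by
    intro i
    induction i with
    | zero =>
      intro h
      have h0 : z ⟨0, h⟩ + t * c (K+2) * zl -
          (if _ : (1:ℕ) ≤ 0 then t * z ⟨0, h⟩ else 0) = 0 := row ⟨0, h⟩
      rw [dif_neg (by omega)] at h0
      rw [show (0:ℕ)+1 = 1 from rfl, Finset.sum_range_one]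
      show z ⟨0, h⟩ = -(c (K+2) * t^1) * zl
      linear_combination h0
    | succ n ih =>
      intro h
      have hn := ih (by omega)
      have hr0 := row ⟨n+1, h⟩
      rw [dif_pos (by norm_num)] at hr0
      have hr : z ⟨n+1, h⟩ + t * c (K+2-(n+1)) * zl - t * z ⟨n, by omega⟩ = 0 := hr0
      rw [hn] at hr
      have hsum : (∑ j ∈ range (n+1+1), c (K+2-j) * t^(n+1+1-j)) =
          t * (∑ j ∈ range (n+1), c (K+2-j) * t^(n+1-j)) + c (K+2-(n+1)) * t := by
        rw [Finset.sum_range_succ, Finset.mul_sum]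
        congr 1
        · apply Finset.sum_congr rfl
          intro j hj
          rw [Finset.mem_range] at hj
          rw [show n+1+1-j = (n+1-j)+1 from by omega, pow_succ]
          ring
        · norm_num
      rw [hsum]
      linear_combination hr
  have hzl0 : zl = 0 := by
    have hl := claim (K+1) (by omega)
    have hs : (∑ j ∈ range (K+1+1), c (K+2-j) * t^(K+1+1-j)) =
        ∑ i ∈ range (K+2), c (i+1) * t^(i+1) := by
      rw [← Finset.sum_range_reflect (fun j => c (j+1) * t^(j+1)) (K+2)]
      apply Finset.sum_congr (by norm_num)
      intro j hj
      rw [Finset.mem_range] at hj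
      have e1 : K+2-1-j+1 = K+2-j := by omega
      have e2 : K+1+1-j = K+2-j := by omega
      simp only [e1, e2]
    rw [hs, ← hzl] at hl
    have hqz : q * zl = 0 := by
      rw [hqdef]
      linear_combination hl
    exact (mul_eq_zero.mp hqz).resolve_left hq
  funext j
  have hj := claim j.val j.isLt
  rw [Fin.eta] at hj
  rw [hj, hzl0]
  simp

lemma companion_solves (K : ℕ) (c : ℕ → ℝ) (t q : ℝ)
    (hqdef : q = 1 + ∑ i ∈ range (K+2), c (i + 1) * t ^ (i + 1)) (hq : q ≠ 0)
    (xsol : Fin (K+2) → ℝ)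
    (hx0 : xsol ⟨0, by omega⟩ = c (K+2) * t^(K+1) / q)
    (hxlast : xsol ⟨K+1, by omega⟩ = -t^K / q)
    (hxmid : ∀ m, ∀ h : m < K+2, 1 ≤ m → m ≤ K →
      xsol ⟨m, h⟩ = -(∑ j ∈ range (K+2-m),
        (if j = 0 then (1:ℝ) else c j) * t^(m-1+j)) / q) :
    ((1 : Matrix (Fin (K+2)) (Fin (K+2)) ℝ) - t • companion (K+2) c).mulVec xsol =
      -Pi.single (⟨1, by omega⟩ : Fin (K+2)) 1 := by
  have hqsplit : q = 1 + ((∑ j ∈ range K, c (j+1) * t^(j+1)) + c (K+1)*t^(K+1)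
      + c (K+2)*t^(K+2)) := by
    rw [hqdef, show K+2 = (K+1)+1 from rfl, Finset.sum_range_succ, Finset.sum_range_succ]
    try ring
  funext i
  rw [companion_row]
  rcases i with ⟨m, h⟩
  simp only [Pi.neg_apply, Pi.single_apply]
  by_cases hm0 : m = 0
  · subst hm0
    rw [dif_neg (by norm_num), if_neg (by simp only [Fin.mk.injEq]; omega), neg_zero]
    show xsol ⟨0, h⟩ + t * c (K+2) * xsol ⟨K+1, by omega⟩ - 0 = 0
    rw [hx0, hxlast]
    try ring
  by_cases hmlast : m = K+1
  · subst hmlast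
    rw [dif_pos (by norm_num)]
    rcases Nat.eq_zero_or_pos K with hK | hK
    · subst hK
      rw [if_pos (by simp only [Fin.mk.injEq])]
      show xsol ⟨1, h⟩ + t * c 1 * xsol ⟨1, by omega⟩ - t * xsol ⟨0, by omega⟩ = -1
      rw [hxlast, hx0]
      have hqe : q = 1 + (c 1 * t^1 + c 2 * t^2) := by
        rw [hqsplit, Finset.sum_range_zero]; norm_num
      field_simp
      linear_combination hqe
    · obtain ⟨L, rfl⟩ : ∃ L, K = L+1 := ⟨K-1, by omega⟩
      rw [if_neg (by simp only [Fin.mk.injEq]; omega), neg_zero]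
      show xsol ⟨L+1+1, h⟩ + t * c (L+1+2-(L+1+1)) * xsol ⟨L+1+1, by omega⟩
        - t * xsol ⟨L+1, by omega⟩ = 0
      rw [show L+1+2-(L+1+1) = 1 from by omega]
      have hxm := hxmid (L+1) (by omega) (by omega) (by omega)
      rw [show (L+1)+2-(L+1) = 2 from by omega] at hxm
      norm_num [Finset.sum_range_succ, Finset.sum_range_one] at hxm
      rw [hxm, hxlast]
      field_simp
      ring
  -- now 1 ≤ m ≤ K
  have hm1 : 1 ≤ m := by omega
  have hmK : m ≤ K := by omega
  rw [dif_pos (by omega)]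
  by_cases hm1' : m = 1
  · subst hm1'
    rw [if_pos (by simp only [Fin.mk.injEq])]
    show xsol ⟨1, h⟩ + t * c (K+1) * xsol ⟨K+1, by omega⟩ - t * xsol ⟨0, by omega⟩ = -1
    have hxm := hxmid 1 h (by omega) hmK
    rw [show K+2-1 = K+1 from by omega] at hxm
    have e : (∑ j ∈ range (K+1), (if j = 0 then (1:ℝ) else c j) * t^(1-1+j)) =
        (∑ j ∈ range K, c (j+1) * t^(j+1)) + 1 := by
      rw [Finset.sum_range_succ']
      have e' : ∀ j ∈ range K, (if j+1 = 0 then (1:ℝ) else c (j+1)) * t^(1-1+(j+1)) =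
          c (j+1) * t^(j+1) := by
        intro j _
        rw [if_neg (by omega), show 1-1+(j+1) = j+1 from by omega]
      rw [Finset.sum_congr rfl e']
      norm_num
    rw [e] at hxm
    rw [hxm, hxlast, hx0]
    field_simp
    linear_combination hqsplit
  · obtain ⟨r, rfl⟩ : ∃ r, m = r+2 := ⟨m-2, by omega⟩
    rw [if_neg (by simp only [Fin.mk.injEq]; omega), neg_zero]
    show xsol ⟨r+2, h⟩ + t * c (K+2-(r+2)) * xsol ⟨K+1, by omega⟩
      - t * xsol ⟨r+1, by omega⟩ = 0
    rw [show K+2-(r+2) = K-r from by omega]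
    have hxm := hxmid (r+2) h (by omega) (by omega)
    have hxm1 := hxmid (r+1) (by omega) (by omega) (by omega)
    rw [show K+2-(r+2) = K-r from by omega] at hxm
    rw [show K+2-(r+1) = (K-r)+1 from by omega] at hxm1
    have e1 : (∑ j ∈ range ((K-r)+1), (if j = 0 then (1:ℝ) else c j) * t^(r+1-1+j)) =
        (∑ j ∈ range (K-r), (if j = 0 then (1:ℝ) else c j) * t^(r+j)) + c (K-r) * t^K := by
      rw [Finset.sum_range_succ, if_neg (by omega), show r+1-1+(K-r) = K from by omega]
      rfl
    have e2 : (∑ j ∈ range (K-r), (if j = 0 then (1:ℝ) else c j) * t^(r+2-1+j)) =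
        t * ∑ j ∈ range (K-r), (if j = 0 then (1:ℝ) else c j) * t^(r+j) := by
      rw [Finset.mul_sum]
      apply Finset.sum_congr rfl
      intro j _
      rw [show r+2-1+j = (r+j)+1 from by omega, pow_succ]
      ring
    rw [e1] at hxm1
    rw [e2] at hxm
    rw [hxm, hxm1, hxlast]
    field_simp
    ring

/-- If `q(t) = 1 + c₁t + ⋯ + c_kt^k ≠ 0` then `I - tC` is invertible and the unique
solution of `(I - tC)x = -e₂` has the explicit rational components. -/
theorem companion_system_solution (k : ℕ) (hk : 2 ≤ k) (c : ℕ → ℝ) (t : ℝ)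
    (q : ℝ) (hqdef : q = 1 + ∑ i ∈ range k, c (i + 1) * t ^ (i + 1)) (hq : q ≠ 0)
    (xsol : Fin k → ℝ)
    (hxdef : ∀ m : Fin k, xsol m =
      if (m : ℕ) = 0 then c k * t ^ (k - 1) / q
      else if (m : ℕ) = k - 1 then -t ^ (k - 2) / q
      else -(∑ j ∈ range (k - (m : ℕ)),
        (if j = 0 then (1 : ℝ) else c j) * t ^ ((m : ℕ) - 1 + j)) / q) :
    IsUnit ((1 : Matrix (Fin k) (Fin k) ℝ) - t • companion k c) ∧
    ((1 : Matrix (Fin k) (Fin k) ℝ) - t • companion k c).mulVec xsol =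
        -Pi.single (⟨1, by omega⟩ : Fin k) 1 ∧
    ∀ y : Fin k → ℝ,
      ((1 : Matrix (Fin k) (Fin k) ℝ) - t • companion k c).mulVec y =
          -Pi.single (⟨1, by omega⟩ : Fin k) 1 → y = xsol := by
  obtain ⟨K, rfl⟩ : ∃ K, k = K + 2 := ⟨k - 2, by omega⟩
  have hx0 : xsol ⟨0, by omega⟩ = c (K+2) * t^(K+1) / q := by
    rw [hxdef ⟨0, by omega⟩]
    norm_num
  have hxlast : xsol ⟨K+1, by omega⟩ = -t^K / q := by
    rw [hxdef ⟨K+1, by omega⟩, if_neg (by norm_num), if_pos (by norm_num)]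
    norm_num
  have hxmid : ∀ m, ∀ h : m < K+2, 1 ≤ m → m ≤ K →
      xsol ⟨m, h⟩ = -(∑ j ∈ range (K+2-m),
        (if j = 0 then (1:ℝ) else c j) * t^(m-1+j)) / q := by
    intro m h h1 hK
    rw [hxdef ⟨m, h⟩, if_neg (by simp only [Fin.val_mk]; omega),
      if_neg (by simp only [Fin.val_mk]; omega)]
  have hsolve := companion_solves K c t q hqdef hq xsol hx0 hxlast hxmid
  have hinj : Function.Injective
      (fun v => ((1 : Matrix (Fin (K+2)) (Fin (K+2)) ℝ) - t • companion (K+2) c).mulVec v) := by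
    intro a b hab
    have hker := companion_ker K c t q hqdef hq (a - b) ?_
    · exact sub_eq_zero.mp hker
    · rw [Matrix.mulVec_sub, sub_eq_zero]
      exact hab
  refine ⟨Matrix.mulVec_injective_iff_isUnit.mp hinj, hsolve, ?_⟩
  intro y hy
  exact hinj (hy.trans hsolve.symm)
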